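/- arXiv:1707.05049 — 3 statements merged into one kernel-verified Lean document; each statement's English description precedes it below -/
import Mathlib

section
/- Every finite group whose Sylow 2-subgroups are either cyclic or elementary abelian is 2-reduced. -/
open scoped TensorProduct Classical

noncomputable section

universe u

namespace Paper

variable {Γ : Type*} [Group Γ]

/-- The differential on inhomogeneous mod 2 cochains of a group, with trivial
coefficients in `ZMod 2`. -/
def d {n : ℕ} (f : (Fin n → Γ) → ZMod 2) : (Fin (n + 1) → Γ) → ZMod 2 :=
  fun g => f (fun i => g i.succ) + ∑ j : Fin (n + 1), f (Fin.contractNth j (· * ·) g)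

/-- `f` is an (inhomogeneous, mod 2) `n`-cocycle. -/
def IsCocycle {n : ℕ} (f : (Fin n → Γ) → ZMod 2) : Prop := d f = 0

/-- `f` is an (inhomogeneous, mod 2) coboundary; equivalently, the cohomology class of
the cocycle `f` vanishes. -/
def IsCoboundary : {n : ℕ} → ((Fin n → Γ) → ZMod 2) → Prop
  | 0, f => f = 0
  | n + 1, f => ∃ h : (Fin n → Γ) → ZMod 2, d h = f

/-- The cup product of mod 2 cochains (trivial coefficients). -/
def cup {m n : ℕ} (f : (Fin m → Γ) → ZMod 2) (h : (Fin n → Γ) → ZMod 2) :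
    (Fin (m + n) → Γ) → ZMod 2 :=
  fun g => f (fun i => g (Fin.castAdd n i)) * h (fun i => g (Fin.natAdd m i))

/-- Iterated cup powers of a degree 2 cochain. -/
def cupPow (f : (Fin 2 → Γ) → ZMod 2) : (k : ℕ) → (Fin (2 * k) → Γ) → ZMod 2
  | 0 => fun _ => 1
  | k + 1 => cup (cupPow f k) f

/-- Restriction of a mod 2 cochain of `G` to a subgroup `H`. -/
def res {G : Type*} [Group G] (H : Subgroup G) {n : ℕ}
    (f : (Fin n → G) → ZMod 2) : (Fin n → H) → ZMod 2 :=
  fun g => f fun i => (g i : G)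

/-- A group `G` is 2-reduced if `H²(G, ℤ/2)` contains no nonzero nilpotent element of the
mod 2 cohomology ring `H^*(G, ℤ/2)`: every 2-cocycle, some nonzero cup power of which is a
coboundary, is itself a coboundary. -/
def IsTwoReduced (G : Type*) [Group G] : Prop :=
  ∀ f : (Fin 2 → G) → ZMod 2, IsCocycle f →
    (∃ k : ℕ, 0 < k ∧ IsCoboundary (cupPow f k)) → IsCoboundary f

/-- A (continuous = locally constant) mod 2 cochain of a topological group is a
coboundary for continuous group cohomology. -/
def IsCoboundaryLC {Γ : Type*} [Group Γ] [TopologicalSpace Γ] :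
    {n : ℕ} → ((Fin n → Γ) → ZMod 2) → Prop
  | 0, f => f = 0
  | n + 1, f => ∃ h : (Fin n → Γ) → ZMod 2, IsLocallyConstant h ∧ d h = f

/-- An algebraic (here: separable, since we only use it in characteristic ≠ 2 where we
take care only of separable phenomena) closure of `K`. -/
abbrev Kbar (K : Type*) [Field K] := AlgebraicClosure K

/-- The absolute Galois group of `K`, with its Krull topology. -/
abbrev GalK (K : Type*) [Field K] := Kbar K ≃ₐ[K] Kbar K

/-- A chosen square root of (the image of) `a` in `Kbar K`. -/
def sqrtb (K : Type*) [Field K] (a : K) : Kbar K :=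
  Classical.choose (IsAlgClosed.exists_pow_nat_eq (algebraMap K (Kbar K) a) (n := 2)
    (by norm_num))

/-- The Kummer 1-cocycle of the absolute Galois group of `K` attached to the square class
of `a ∈ K`: its class is the image of `a` under `K^×/(K^×)² ≅ H¹(G_K, ℤ/2)`. -/
def sqClass (K : Type*) [Field K] (a : K) : (Fin 1 → GalK K) → ZMod 2 :=
  fun g => if g 0 (sqrtb K a) = sqrtb K a then 0 else 1

/-- A cocycle representing the `m`-th Hasse-Witt invariant
`w_m(q) = ∑_{i₁ < ⋯ < i_m} (a_{i₁})⋯(a_{i_m}) ∈ H^m(G_K, ℤ/2)`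
of the diagonal quadratic form `⟨a 0, …, a (n-1)⟩` over `K`. -/
def hw (K : Type*) [Field K] {n : ℕ} (a : Fin n → K) (m : ℕ) :
    (Fin m → GalK K) → ZMod 2 :=
  fun g =>
    ∑ s ∈ (Finset.powersetCard m (Finset.univ : Finset (Fin n))).attach,
      ∏ j : Fin m,
        sqClass K (a ((s.1.orderIsoOfFin (Finset.mem_powersetCard.mp s.2).2 j : Fin n)))
          (fun _ => g j)

/-- The trace form `q_L(x) = Tr_{L/K}(x²)` of a `K`-algebra `L`, as a quadratic form. -/
def traceFormQ (K L : Type*) [Field K] [CommRing L] [Algebra K L] : QuadraticForm K L :=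
  LinearMap.BilinMap.toQuadraticMap (Algebra.traceForm K L)

/-- `L` is a `G`-Galois algebra over `K`: an étale `K`-algebra of degree `|G|` on which `G`
acts (by `K`-algebra automorphisms) in such a way that the action on
`Hom^{alg}_K(L, K^s)` is simply transitive. -/
def IsGaloisAlgebra (G : Type*) [Group G] (K L : Type u) [Field K] [CommRing L] [Algebra K L]
    [MulSemiringAction G L] [SMulCommClass G K L] : Prop :=
  Algebra.Etale K L ∧ Module.finrank K L = Nat.card G ∧
    ∀ χ χ' : L →ₐ[K] Kbar K, ∃! g : G, χ' = χ.comp (MulSemiringAction.toAlgHom K L g)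

/-- `L ⊗_K K_v` is a split algebra at the real place of `K` given by the embedding
`φ : K → ℝ`. -/
def SplitsAtReal (K L : Type*) [Field K] [CommRing L] [Algebra K L] (n : ℕ)
    (φ : K →+* ℝ) : Prop :=
  letI : Algebra K ℝ := φ.toAlgebra
  Nonempty (TensorProduct K ℝ L ≃ₐ[ℝ] (Fin n → ℝ))

/-- An étale `ℚ`-algebra of degree `n` is totally real if `L ⊗_ℚ ℝ` is split. -/
def TotallyRealAlg (L : Type*) [CommRing L] [Algebra ℚ L] (n : ℕ) : Prop :=
  Nonempty (TensorProduct ℚ ℝ L ≃ₐ[ℝ] (Fin n → ℝ))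

/-- An étale `ℚ`-algebra of degree `n` is totally imaginary if `L ⊗_ℚ ℝ` is a product of
`n/2` copies of `ℂ`. -/
def TotallyImaginaryAlg (L : Type*) [CommRing L] [Algebra ℚ L] (n : ℕ) : Prop :=
  Nonempty (TensorProduct ℚ ℝ L ≃ₐ[ℝ] (Fin (n / 2) → ℂ))

/-- A group is metacyclic if it is an extension of a cyclic group by a cyclic group. -/
def IsMetacyclic (G : Type*) [Group G] : Prop :=
  ∃ N : Subgroup G, IsCyclic N ∧ ∃ hN : N.Normal, haveI := hN; IsCyclic (G ⧸ N)


/-- The unit quadratic form `⟨1, …, 1⟩` on `ι → k`. -/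
def unitQF (k : Type*) [Field k] (ι : Type*) [Fintype ι] : QuadraticForm k (ι → k) :=
  QuadraticMap.weightedSumSquares k fun _ : ι => (1 : k)

end Paper

/-!
For an involution `a`, summing a mod 2 cochain over all bar simplices with entries in `{1, a}`
is multiplicative for the cup product and kills coboundaries. Applied to a 2-cocycle `f` with a
vanishing cup power it gives `f(a, a) = f(1, 1)`: the class of `f` restricts to zero on every
subgroup of order 2.

A 2-cocycle is a coboundary exactly when the central extension of `G` by `ℤ/2` it classifies
splits, and the condition above says that every involution of `G` lifts to an involution. Over a
cyclic 2-group this lets one lift a generator to an element of the same order; over an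
elementary abelian 2-group it makes the extension elementary abelian, so it splits by linear
algebra over `𝔽₂`. Hence the extension splits over a Sylow 2-subgroup `S`. A splitting over `S`
is a retraction onto `ℤ/2` of the preimage of `S`, whose index is odd, and its transfer is a
retraction of the whole extension, since on the central `ℤ/2` it is the odd power map.
-/

namespace Paper

variable {G : Type*} [Group G]

/-- Inhomogeneous 2-cocycles and 2-coboundaries with values in `ZMod 2`, written as functions of
two variables; signs play no role mod 2. -/
def IsCocycle₂ (F : G → G → ZMod 2) : Prop :=
  ∀ a b c, F b c + F (a * b) c + F a (b * c) + F a b = 0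

def IsCoboundary₂ (F : G → G → ZMod 2) : Prop :=
  ∃ U : G → ZMod 2, ∀ a b, U b + U (a * b) + U a = F a b

namespace IsCocycle₂

variable {F : G → G → ZMod 2}

theorem apply_one_left (hF : IsCocycle₂ F) (x : G) : F 1 x = F 1 1 := by
  have h := hF 1 1 x
  simp only [one_mul] at h
  grind

theorem apply_one_right (hF : IsCocycle₂ F) (x : G) : F x 1 = F 1 1 := by
  have h := hF x 1 1
  simp only [mul_one] at h
  grind

theorem comp {H : Type*} [Group H] (hF : IsCocycle₂ F) (φ : H →* G) :
    IsCocycle₂ fun a b => F (φ a) (φ b) := fun a b c => by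
  simpa only [map_mul] using hF (φ a) (φ b) (φ c)

end IsCocycle₂

theorem IsCocycle.isCocycle₂ {f : (Fin 2 → G) → ZMod 2} (hf : IsCocycle f) :
    IsCocycle₂ fun a b => f ![a, b] := fun a b c => by
  have h := congrFun hf ![a, b, c]
  obtain ⟨e₀, e₁, e₂⟩ : Fin.contractNth 0 (· * ·) ![a, b, c] = ![a * b, c] ∧
      Fin.contractNth 1 (· * ·) ![a, b, c] = ![a, b * c] ∧
      Fin.contractNth 2 (· * ·) ![a, b, c] = ![a, b] := by
    refine ⟨?_, ?_, ?_⟩ <;> ext k <;> fin_cases k <;> rfl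
  simp only [d, Fin.sum_univ_succ, Fin.sum_univ_zero, Fin.succ_zero_eq_one, Fin.succ_one_eq_two,
    Matrix.cons_val_succ, e₀, e₁, e₂, Pi.zero_apply] at h
  linear_combination h

theorem isCoboundary_of_isCoboundary₂ {f : (Fin 2 → G) → ZMod 2}
    (hf : IsCoboundary₂ fun a b => f ![a, b]) : IsCoboundary f := by
  obtain ⟨U, hU⟩ := hf
  refine ⟨fun t => U (t 0), funext fun g => ?_⟩
  have hg : ![g 0, g 1] = g := by ext i; fin_cases i <;> rfl
  have h : U (g 1) + U (g 0 * g 1) + U (g 0) = f ![g 0, g 1] := hU (g 0) (g 1)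
  rw [hg] at h
  change U (g 1) + (U (g 0 * g 1) + (U (g 0) + 0)) = f g
  linear_combination h

theorem sum_eq_zero_of_flip_invariant {ι R : Type*} [Fintype ι] [DecidableEq ι] [Ring R]
    [CharP R 2] (φ : (ι → Bool) → R) {s : Finset ι} (hs : s.Nonempty)
    (hφ : ∀ v, φ (fun i => xor (v i) (decide (i ∈ s))) = φ v) : ∑ v, φ v = 0 :=
  Finset.sum_ninvolution (fun v i => xor (v i) (decide (i ∈ s)))
    (fun v => by rw [hφ]; exact CharTwo.add_self_eq_zero _)
    (fun v _ hv => by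
      obtain ⟨i, hi⟩ := hs
      simpa [hi] using congrFun hv i)
    (fun _ => Finset.mem_univ _)
    (fun v => funext fun i => by simp)

def cubeVertex (a : G) {n : ℕ} (v : Fin n → Bool) : Fin n → G := fun i => bif v i then a else 1

/-- The value of an `n`-cochain on the sum of the bar simplices `[g₁ | ⋯ | gₙ]` with all
`gᵢ ∈ {1, a}`; when `a * a = 1` this chain is a cycle mod 2. -/
def cubeSum (a : G) {n : ℕ} (F : (Fin n → G) → ZMod 2) : ZMod 2 :=
  ∑ v : Fin n → Bool, F (cubeVertex a v)

/-- The `j`-th face merges the entries `j` and `j + 1`, whose product is unchanged when both are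
flipped between `1` and `a` (for the last face there is no entry `j + 1`, and entry `j` is
dropped). -/
theorem contractNth_cubeVertex_flip {a : G} (ha : a * a = 1) {n : ℕ} (j : Fin (n + 1))
    (v : Fin (n + 1) → Bool) :
    Fin.contractNth j (· * ·) (cubeVertex a fun i =>
      xor (v i) (decide (i ∈ Finset.univ.filter fun i : Fin (n + 1) =>
        (i : ℕ) = j ∨ (i : ℕ) = j + 1))) =
      Fin.contractNth j (· * ·) (cubeVertex a v) := by
  ext k
  rcases lt_trichotomy (k : ℕ) j with hk | hk | hk
  · simp only [Fin.contractNth_apply_of_lt _ _ _ _ hk, cubeVertex, Finset.mem_filter,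
      Finset.mem_univ, true_and, Fin.val_castSucc]
    rw [decide_eq_false (by omega), Bool.xor_false]
  · simp only [Fin.contractNth_apply_of_eq _ _ _ _ hk, cubeVertex, Finset.mem_filter,
      Finset.mem_univ, true_and, Fin.val_castSucc, Fin.val_succ]
    rw [decide_eq_true (by omega), decide_eq_true (by omega)]
    cases v k.castSucc <;> cases v k.succ <;> simp [ha]
  · simp only [Fin.contractNth_apply_of_gt _ _ _ _ hk, cubeVertex, Finset.mem_filter,
      Finset.mem_univ, true_and, Fin.val_succ]
    rw [decide_eq_false (by omega), Bool.xor_false]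

theorem cubeSum_d {a : G} (ha : a * a = 1) {n : ℕ} (h : (Fin n → G) → ZMod 2) :
    cubeSum a (d h) = 0 := by
  simp only [cubeSum, d, Finset.sum_add_distrib]
  rw [Finset.sum_comm, sum_eq_zero_of_flip_invariant _ (Finset.singleton_nonempty 0) fun v => ?_,
    Finset.sum_eq_zero fun j _ => sum_eq_zero_of_flip_invariant _ ⟨j, by simp⟩ fun v =>
      congrArg h (contractNth_cubeVertex_flip ha j v), add_zero]
  congr 1
  ext i
  simp [cubeVertex, Fin.succ_ne_zero]

theorem cubeSum_cup (a : G) {m n : ℕ} (F : (Fin m → G) → ZMod 2) (H : (Fin n → G) → ZMod 2) :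
    cubeSum a (cup F H) = cubeSum a F * cubeSum a H := by
  rw [cubeSum, ← (Fin.appendEquiv m n).sum_comp, Fintype.sum_prod_type, cubeSum, cubeSum,
    Fintype.sum_mul_sum]
  congr! 3 with x _ y
  simp only [cup]
  congr 2 <;> ext i <;> simp [cubeVertex]

theorem cubeSum_cupPow (a : G) (f : (Fin 2 → G) → ZMod 2) (k : ℕ) :
    cubeSum a (cupPow f k) = cubeSum a f ^ k := by
  induction k with
  | zero => simp [cubeSum, cupPow]
  | succ k ih => rw [cupPow, cubeSum_cup, ih, pow_succ]

theorem cubeSum_two (a : G) (f : (Fin 2 → G) → ZMod 2) :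
    cubeSum a f = f ![a, a] + f ![a, 1] + f ![1, a] + f ![1, 1] := by
  have hv (b c : Bool) : cubeVertex a ![b, c] = ![bif b then a else 1, bif c then a else 1] := by
    ext i; fin_cases i <;> rfl
  rw [cubeSum, ← (finTwoArrowEquiv Bool).symm.sum_comp]
  simp only [Fintype.sum_prod_type, Fintype.sum_bool, finTwoArrowEquiv_symm_apply, hv, cond_true,
    cond_false]
  ring

theorem IsCocycle.apply_involution_of_cupPow_isCoboundary {f : (Fin 2 → G) → ZMod 2}
    (hf : IsCocycle f) {k : ℕ} (hk : 0 < k) (hfk : IsCoboundary (cupPow f k)) {a : G}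
    (ha : a * a = 1) : f ![a, a] = f ![1, 1] := by
  obtain ⟨k, rfl⟩ : ∃ k', k = k' + 1 := ⟨k - 1, by omega⟩
  obtain ⟨h, hh⟩ : ∃ h : (Fin (2 * k + 1) → G) → ZMod 2, d h = cupPow f (k + 1) := hfk
  have hpow : cubeSum a f ^ (k + 1) = 0 := by rw [← cubeSum_cupPow, ← hh, cubeSum_d ha]
  have hsum := pow_eq_zero_iff (Nat.succ_ne_zero _) |>.mp hpow
  have hleft := hf.isCocycle₂.apply_one_left a
  have hright := hf.isCocycle₂.apply_one_right a
  rw [cubeSum_two] at hsum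
  grind

@[ext]
structure Extension (F : G → G → ZMod 2) where
  base : G
  fiber : ZMod 2

namespace Extension

variable {F : G → G → ZMod 2}

instance : Mul (Extension F) :=
  ⟨fun x y => ⟨x.base * y.base, x.fiber + y.fiber + F x.base y.base⟩⟩

instance : One (Extension F) := ⟨⟨1, F 1 1⟩⟩

instance : Inv (Extension F) := ⟨fun x => ⟨x.base⁻¹, x.fiber + F x.base⁻¹ x.base + F 1 1⟩⟩

@[simp] theorem mul_base (x y : Extension F) : (x * y).base = x.base * y.base := rfl

@[simp] theorem mul_fiber (x y : Extension F) :
    (x * y).fiber = x.fiber + y.fiber + F x.base y.base := rfl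

@[simp] theorem one_base : (1 : Extension F).base = 1 := rfl

@[simp] theorem one_fiber : (1 : Extension F).fiber = F 1 1 := rfl

@[simp] theorem inv_base (x : Extension F) : x⁻¹.base = x.base⁻¹ := rfl

@[simp] theorem inv_fiber (x : Extension F) : x⁻¹.fiber = x.fiber + F x.base⁻¹ x.base + F 1 1 :=
  rfl

theorem mul_self_eq_one {x : Extension F} (hx : x.base * x.base = 1)
    (hF₁ : F x.base x.base = F 1 1) : x * x = 1 :=
  Extension.ext hx (by simp only [mul_fiber, one_fiber, hF₁, CharTwo.add_self_eq_zero, zero_add])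

variable [hF : Fact (IsCocycle₂ F)]

instance : Group (Extension F) :=
  Group.ofLeftAxioms
    (fun x y z => Extension.ext (mul_assoc _ _ _) (by
      have := hF.out x.base y.base z.base
      simp only [mul_fiber, mul_base]
      grind))
    (fun x => Extension.ext (one_mul _) (by
      have := hF.out.apply_one_left x.base
      simp only [mul_fiber, one_fiber, one_base]
      grind))
    (fun x => Extension.ext (inv_mul_cancel _) (by
      simp only [mul_fiber, inv_fiber, inv_base, one_fiber]
      grind))

variable (F) in
def proj : Extension F →* G where
  toFun := base
  map_one' := rfl
  map_mul' _ _ := rfl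

@[simp] theorem proj_apply (x : Extension F) : proj F x = x.base := rfl

theorem proj_surjective : Function.Surjective (proj F) := fun a => ⟨⟨a, 0⟩, rfl⟩

theorem mk_one_mem_center (t : ZMod 2) : (⟨1, t⟩ : Extension F) ∈ Subgroup.center _ :=
  Subgroup.mem_center_iff.mpr fun x => Extension.ext (by simp) (by
    simp only [mul_fiber, hF.out.apply_one_left, hF.out.apply_one_right]
    ring)

theorem isCoboundary₂_of_section (σ : G →* Extension F) (hσ : ∀ a, (σ a).base = a) :
    IsCoboundary₂ F :=
  ⟨fun a => (σ a).fiber, fun a b => by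
    have := congrArg fiber (map_mul σ a b)
    simp only [mul_fiber, hσ] at this
    grind⟩

theorem isCoboundary₂_of_retraction (χ : Extension F →* Multiplicative (ZMod 2))
    (hχ : ∀ t, χ ⟨1, t⟩ = .ofAdd (t + F 1 1)) : IsCoboundary₂ F :=
  ⟨fun a => (χ ⟨a, 0⟩).toAdd, fun a b => by
    have hab : (⟨a, 0⟩ : Extension F) * ⟨b, 0⟩ = ⟨a * b, 0⟩ * ⟨1, F a b + F 1 1⟩ :=
      Extension.ext (mul_one _).symm (by
        simp only [mul_fiber, hF.out.apply_one_right]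
        grind)
    have := congrArg Multiplicative.toAdd (congrArg χ hab)
    simp only [map_mul, hχ, toAdd_mul, toAdd_ofAdd] at this
    grind⟩

end Extension

theorem commute_of_forall_mul_self_eq_one {E : Type*} [Group E] (hE : ∀ x : E, x * x = 1)
    (x y : E) : Commute x y :=
  Commute.of_orderOf_dvd_two (fun z => orderOf_dvd_of_pow_eq_one ((sq z).trans (hE z))) x y

theorem exists_section_of_forall_mul_self_eq_one {E H : Type*} [Group E] [Group H]
    (hE : ∀ x : E, x * x = 1) (π : E →* H) (hπ : Function.Surjective π) :
    ∃ σ : H →* E, ∀ a, π (σ a) = a := by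
  have hH : ∀ a : H, a * a = 1 := fun a => by
    obtain ⟨x, rfl⟩ := hπ a
    rw [← map_mul, hE, map_one]
  let : CommGroup E := { mul_comm := fun x y => (commute_of_forall_mul_self_eq_one hE x y).eq }
  let : CommGroup H := { mul_comm := fun x y => (commute_of_forall_mul_self_eq_one hH x y).eq }
  let : Module (ZMod 2) (Additive E) :=
    AddCommGroup.zmodModule fun x => (two_nsmul x).trans (hE x.toMul)
  let : Module (ZMod 2) (Additive H) :=
    AddCommGroup.zmodModule fun x => (two_nsmul x).trans (hH x.toMul)
  obtain ⟨σ, hσ⟩ := (π.toAdditive.toZModLinearMap 2).exists_rightInverse_of_surjective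
    (LinearMap.range_eq_top.mpr hπ)
  exact ⟨MonoidHom.toAdditive.symm σ.toAddMonoidHom,
    fun a => congrArg Additive.toMul (LinearMap.congr_fun hσ (Additive.ofMul a))⟩

namespace IsCocycle₂

variable {F : G → G → ZMod 2}

theorem isCoboundary₂_of_forall_mul_self_eq_one (hF : IsCocycle₂ F) (hG : ∀ a : G, a * a = 1)
    (hFa : ∀ a, F a a = F 1 1) : IsCoboundary₂ F := by
  have := Fact.mk hF
  obtain ⟨σ, hσ⟩ := exists_section_of_forall_mul_self_eq_one
    (fun x => Extension.mul_self_eq_one (hG x.base) (hFa x.base)) _ Extension.proj_surjective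
  exact Extension.isCoboundary₂_of_section σ hσ

theorem isCoboundary₂_of_isCyclic [IsCyclic G] (hG : IsPGroup 2 G) (hF : IsCocycle₂ F)
    (hFa : ∀ a : G, a * a = 1 → F a a = F 1 1) : IsCoboundary₂ F := by
  have := Fact.mk hF
  have := Fact.mk Nat.prime_two
  obtain ⟨g, hg⟩ := IsCyclic.exists_generator (α := G)
  obtain ⟨r, hr⟩ := hG.exists_orderOf_eq_pow g
  obtain ⟨g', rfl, hg'⟩ : ∃ g' : Extension F, g'.base = g ∧ g' ^ 2 ^ r = 1 := by
    cases r with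
    | zero => exact ⟨1, (orderOf_eq_one_iff.mp hr).symm, pow_one 1⟩
    | succ r =>
      have hinv : g ^ 2 ^ r * g ^ 2 ^ r = 1 := by
        rw [← pow_add, ← two_mul, ← pow_succ', ← hr, pow_orderOf_eq_one]
      refine ⟨⟨g, 0⟩, rfl, ?_⟩
      have hbase : (⟨g, 0⟩ ^ 2 ^ r : Extension F).base = g ^ 2 ^ r :=
        map_pow (Extension.proj F) _ _
      rw [pow_succ, pow_mul, sq]
      exact Extension.mul_self_eq_one (hbase ▸ hinv) (hbase ▸ hFa _ hinv)
  let σ := monoidHomOfForallMemZpowers hg (orderOf_dvd_of_pow_eq_one (hr ▸ hg'))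
  have hσ : (Extension.proj F).comp σ = MonoidHom.id G :=
    (MonoidHom.eq_iff_eq_on_generator hg _ _).mpr (by simp [σ])
  exact Extension.isCoboundary₂_of_section σ (DFunLike.congr_fun hσ)

theorem isCoboundary₂_of_subgroup (hF : IsCocycle₂ F) {S : Subgroup G} (hS : ¬ 2 ∣ S.index)
    (hFS : IsCoboundary₂ fun a b : S => F a b) : IsCoboundary₂ F := by
  have := Fact.mk hF
  obtain ⟨u, hu⟩ := hFS
  have hu₁ : u 1 = F 1 1 := by
    have := hu 1 1
    simp only [mul_one, OneMemClass.coe_one] at this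
    grind
  let π := Extension.proj F
  let T := S.comap π
  obtain ⟨k, hk⟩ : Odd T.index := by
    rw [S.index_comap_of_surjective Extension.proj_surjective]
    exact Nat.odd_iff.mpr (Nat.two_dvd_ne_zero.mp hS)
  have : T.FiniteIndex := ⟨by omega⟩
  let ρ : T →* Multiplicative (ZMod 2) :=
    { toFun x := .ofAdd ((x : Extension F).fiber + u ⟨π (x : Extension F), x.2⟩)
      map_one' := by
        change Multiplicative.ofAdd (F 1 1 + u 1) = 1
        rw [hu₁, CharTwo.add_self_eq_zero, ofAdd_zero]
      map_mul' x y := by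
        have hxy : (⟨π ↑(x * y), (x * y).2⟩ : S) =
            ⟨π (x : Extension F), x.2⟩ * ⟨π (y : Extension F), y.2⟩ :=
          Subtype.ext (map_mul π (x : Extension F) y)
        have := hu ⟨π (x : Extension F), x.2⟩ ⟨π (y : Extension F), y.2⟩
        rw [hxy, ← ofAdd_add]
        change Multiplicative.ofAdd ((x : Extension F).fiber + (y : Extension F).fiber
          + F (π (x : Extension F)) (π (y : Extension F)) + _) = _
        grind }
  refine Extension.isCoboundary₂_of_retraction ρ.transfer fun t => ?_
  set z : Extension F := ⟨1, t⟩
  have hz : z ∈ Subgroup.center _ := Extension.mk_one_mem_center t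
  have hzz : z ^ T.index = z := by
    rw [hk, pow_succ, pow_mul, sq, Extension.mul_self_eq_one (mul_one 1) rfl, one_pow, one_mul]
  rw [MonoidHom.transfer_eq_pow ρ _ fun n g₀ _ => ?_]
  · simp only [hzz]
    change Multiplicative.ofAdd (t + u 1) = _
    rw [hu₁]
  · rw [Subgroup.mem_center_iff.mp (pow_mem hz n) g₀⁻¹, inv_mul_cancel_right]

end IsCocycle₂

end Paper

/-- Every finite group whose Sylow 2-subgroups are either cyclic or
elementary abelian is 2-reduced. -/
theorem statement_8 (G : Type*) [Group G] [Finite G]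
    (h : ∀ S : Sylow 2 G, IsCyclic ↥S ∨ ∀ x : ↥S, x * x = 1) :
    Paper.IsTwoReduced G := by
  intro f hf ⟨k, hk, hfk⟩
  have hF := hf.isCocycle₂
  have hinv (a : G) (ha : a * a = 1) : f ![a, a] = f ![1, 1] :=
    hf.apply_involution_of_cupPow_isCoboundary hk hfk ha
  have := Fact.mk Nat.prime_two
  obtain ⟨S⟩ : Nonempty (Sylow 2 G) := inferInstance
  have hFS : Paper.IsCoboundary₂ fun a b : S => f ![a, b] := by
    have hFS := hF.comp (S : Subgroup G).subtype
    rcases h S with hS | hS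
    · exact hFS.isCoboundary₂_of_isCyclic S.isPGroup'
        fun a ha => hinv a (congrArg Subtype.val ha)
    · exact hFS.isCoboundary₂_of_forall_mul_self_eq_one hS
        fun a => hinv a (congrArg Subtype.val (hS a))
  exact Paper.isCoboundary_of_isCoboundary₂ (hF.isCoboundary₂_of_subgroup S.not_dvd_index hFS)
end
end

section
/- Let H be an elementary abelian 2-group. Then every group extension 1 → Z/2Z → H' → H → 1 in which every element of order 2 in H has a lift of order 2 in H' is split, i.e., Ker(s_H) = 0, where s_H: H^2(H, Z/2Z) → Π_T H^2(T, Z/2Z) is the product of the restriction maps to all order-2 subgroups T of H. -/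
open scoped TensorProduct Classical

noncomputable section

universe u

/-! A normal subgroup of order 2 is central and of exponent 2. So if `x ∈ H'` maps to an
involution and `y` is a lift of it of order 2, then `x = y k` with `k` central in the kernel
and `x² = y² k² = 1`. Thus `H'` has exponent 2, i.e. it is an `𝔽₂`-vector space, and the
surjection `H' → H` splits by linear algebra. -/

namespace Subgroup

variable {G : Type*} [Group G]

theorem mul_self_eq_one_of_card_eq_two {N : Subgroup G} (hN : Nat.card N = 2) {n : G}
    (hn : n ∈ N) : n * n = 1 := by
  have h : (⟨n, hn⟩ : N) ^ Nat.card N = 1 := pow_card_eq_one'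
  rw [hN, pow_two] at h
  exact congrArg Subtype.val h

theorem le_center_of_card_eq_two {N : Subgroup G} [hnormal : N.Normal] (hN : Nat.card N = 2) :
    N ≤ center G := by
  obtain ⟨z, -, hz⟩ := (Nat.card_eq_two_iff' (1 : N)).mp hN
  intro n hn
  rw [mem_center_iff]
  intro g
  by_cases hn1 : n = 1
  · simp [hn1]
  have hconj : g * n * g⁻¹ ∈ N := hnormal.conj_mem n hn g
  have hconj1 : g * n * g⁻¹ ≠ 1 := by simpa [mul_inv_eq_one] using hn1
  have heq : (⟨g * n * g⁻¹, hconj⟩ : N) = ⟨n, hn⟩ :=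
    (hz _ (by simpa using hconj1)).trans (hz _ (by simpa using hn1)).symm
  exact mul_inv_eq_iff_eq_mul.mp (congrArg Subtype.val heq)

end Subgroup

theorem mul_comm_of_mul_self_eq_one {G : Type*} [Group G] (hG : ∀ x : G, x * x = 1) (a b : G) :
    a * b = b * a :=
  (Commute.of_orderOf_dvd_two
    (fun g ↦ orderOf_dvd_of_pow_eq_one ((pow_two g).trans (hG g))) a b).eq

namespace MonoidHom

variable {G H : Type*} [Group G] [Group H]

theorem mul_self_eq_one_of_lift_involutions (s : G →* H) (hcenter : s.ker ≤ Subgroup.center G)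
    (hker : ∀ k ∈ s.ker, k * k = 1) (hH : ∀ y : H, y * y = 1)
    (hlift : ∀ h : H, orderOf h = 2 → ∃ h' : G, s h' = h ∧ orderOf h' = 2) (x : G) :
    x * x = 1 := by
  by_cases hx : s x = 1
  · exact hker x hx
  obtain ⟨y, hys, hy⟩ := hlift (s x) (orderOf_eq_prime (by rw [pow_two, hH] : s x ^ 2 = 1) hx)
  have hy2 : y * y = 1 := by rw [← pow_two, ← hy, pow_orderOf_eq_one]
  have hk : y⁻¹ * x ∈ s.ker := by simp [mem_ker, hys]
  have hcomm : Commute (y⁻¹ * x) y :=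
    Subgroup.mem_center_iff.mp (hcenter hk) y |>.symm
  calc x * x = y * (y⁻¹ * x) * (y * (y⁻¹ * x)) := by group
    _ = y * y * ((y⁻¹ * x) * (y⁻¹ * x)) := hcomm.mul_mul_mul_comm y _
    _ = 1 := by rw [hy2, hker _ hk, one_mul]

theorem exists_rightInverse_of_mul_self_eq_one (hG : ∀ x : G, x * x = 1) (s : G →* H)
    (hs : Function.Surjective s) : ∃ σ : H →* G, ∀ h : H, s (σ h) = h := by
  have hH (y : H) : y * y = 1 := by
    obtain ⟨x, rfl⟩ := hs y
    rw [← map_mul, hG, map_one]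
  let : CommGroup G := { mul_comm := mul_comm_of_mul_self_eq_one hG }
  let : CommGroup H := { mul_comm := mul_comm_of_mul_self_eq_one hH }
  let : Module (ZMod 2) (Additive G) := AddCommGroup.zmodModule fun x ↦ by
    rw [two_nsmul]; exact hG x.toMul
  let : Module (ZMod 2) (Additive H) := AddCommGroup.zmodModule fun y ↦ by
    rw [two_nsmul]; exact hH y.toMul
  obtain ⟨σ, hσ⟩ := (s.toAdditive.toZModLinearMap 2).exists_rightInverse_of_surjective
    (LinearMap.range_eq_top.mpr hs)
  exact ⟨toAdditive.symm σ.toAddMonoidHom,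
    fun h ↦ LinearMap.congr_fun hσ (Additive.ofMul h)⟩

end MonoidHom

theorem statement_13_general (H : Type*) [Group H] (helem : ∀ x : H, x * x = 1)
    (H' : Type*) [Group H'] (s : H' →* H) (hs : Function.Surjective s)
    (hker : Nat.card ↥s.ker = 2)
    (hlift : ∀ h : H, orderOf h = 2 → ∃ h' : H', s h' = h ∧ orderOf h' = 2) :
    ∃ σ : H →* H', ∀ h : H, s (σ h) = h :=
  s.exists_rightInverse_of_mul_self_eq_one
    (s.mul_self_eq_one_of_lift_involutions (Subgroup.le_center_of_card_eq_two hker)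
      (fun _ ↦ Subgroup.mul_self_eq_one_of_card_eq_two hker) helem hlift) hs

/-- If `H` is an elementary abelian 2-group, every group extension
`1 → ℤ/2 → H' → H → 1` in which every element of order 2 of `H` lifts to an element of
order 2 of `H'` is split, i.e. `Ker(s_H) = 0`. -/
theorem statement_13 (H : Type*) [Group H] [Finite H] (helem : ∀ x : H, x * x = 1)
    (H' : Type*) [Group H'] (s : H' →* H) (hs : Function.Surjective s)
    (hker : Nat.card ↥s.ker = 2)
    (hlift : ∀ h : H, orderOf h = 2 → ∃ h' : H', s h' = h ∧ orderOf h' = 2) :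
    ∃ σ : H →* H', ∀ h : H, s (σ h) = h :=
  statement_13_general H helem H' s hs hker hlift
end
end

section
/- Let G be a finite group of even order n and let f: G → S_n be the permutation representation given by left multiplication of G on itself. Then Im(f) is contained in the alternating group A_n if and only if the Sylow 2-subgroups of G are non-cyclic. -/
open scoped TensorProduct Classical

noncomputable section

universe u

/-!
Left multiplication by `g` permutes each right coset of `⟨g⟩` cyclically, so it is a product of
`|G| / d` cycles of length `d = orderOf g`, and it is odd exactly when `d` is even and `|G| / d`
is odd. As `|G|` is even, this says that `d` carries the full power `2ᵏ` of `2` dividing `|G|`;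
then `g ^ (d / 2ᵏ)` generates a cyclic Sylow 2-subgroup, and conversely a generator of a cyclic
Sylow 2-subgroup is such a `g`.
-/

open Equiv Equiv.Perm Subgroup

namespace Subgroup

variable {G : Type*} [Group G] (H : Subgroup G)

/-- An explicit form of `Subgroup.groupEquivQuotientProdSubgroup`, visibly equivariant for right
multiplication by `H`. -/
def equivQuotientProd : G ≃ (G ⧸ H) × H where
  toFun x := (x, ⟨(Quotient.out (x : G ⧸ H))⁻¹ * x, by
    rw [← QuotientGroup.eq]; exact QuotientGroup.out_eq' _⟩)
  invFun p := Quotient.out p.1 * (p.2 : G)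
  left_inv x := by simp
  right_inv := by
    rintro ⟨q, h⟩
    have hq : ((Quotient.out q * h : G) : G ⧸ H) = q := by
      rw [QuotientGroup.mk_mul_of_mem _ h.2, QuotientGroup.out_eq']
    simp only [hq, Prod.mk.injEq, true_and, Subtype.ext_iff]
    group

theorem equivQuotientProd_permCongr_mulRight (h : H) :
    (equivQuotientProd H).permCongr (Equiv.mulRight (h : G)) =
      prodCongrRight fun _ => Equiv.mulRight h := by
  ext ⟨q, x⟩
  · simp [equivQuotientProd, permCongr_apply, QuotientGroup.mk_mul_of_mem _ x.2,
      QuotientGroup.mk_mul_of_mem _ h.2]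
  · have hq : ((Quotient.out q * (x * h) : G) : G ⧸ H) = q := by
      rw [QuotientGroup.mk_mul_of_mem _ (mul_mem x.2 h.2), QuotientGroup.out_eq']
    simp only [equivQuotientProd, permCongr_apply, coe_fn_mk, coe_mulRight,
      prodCongrRight_apply, coe_fn_symm_mk, mul_assoc, hq]
    rw [MulMemClass.coe_mul]
    group

theorem sign_mulRight_coe [Fintype G] [DecidableEq G] [Fintype H] [DecidableEq H] (h : H) :
    sign (Equiv.mulRight (h : G)) = sign (Equiv.mulRight h) ^ H.index := by
  rw [← sign_permCongr (equivQuotientProd H), equivQuotientProd_permCongr_mulRight,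
    sign_prodCongrRight, Finset.prod_const, Finset.card_univ, index_eq_card,
    Nat.card_eq_fintype_card]

end Subgroup

section Sign

variable {G : Type*} [Group G] [Fintype G] [DecidableEq G]

theorem sign_mulRight_of_forall_mem_zpowers {c : G} (hc : ∀ x, x ∈ zpowers c) :
    sign (Equiv.mulRight c) = -(-1) ^ Fintype.card G := by
  rcases eq_or_ne c 1 with rfl | hc1
  · have : Fintype.card G = 1 :=
      Fintype.card_eq_one_iff.mpr ⟨1, fun x => by simpa using hc x⟩
    simp [this]
  have hfree : ∀ x : G, Equiv.mulRight c x ≠ x := by simpa using hc1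
  have hcycle : (Equiv.mulRight c).IsCycle := by
    refine ⟨1, hfree 1, fun y _ => ?_⟩
    obtain ⟨k, rfl⟩ := mem_zpowers_iff.mp (hc y)
    exact ⟨k, by simp [zpow_mulRight]⟩
  have hsupport : (Equiv.mulRight c).support = Finset.univ := by
    ext x
    simpa using hfree x
  rw [hcycle.sign, hsupport, Finset.card_univ]

omit [Fintype G] [DecidableEq G] in
theorem permCongr_inv_mulLeft (g : G) :
    (Equiv.inv G).permCongr (Equiv.mulLeft g) = Equiv.mulRight g⁻¹ := by
  ext x
  simp

theorem sign_mulLeft_eq_sign_mulRight (g : G) :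
    sign (Equiv.mulLeft g) = sign (Equiv.mulRight g) := by
  rw [← sign_permCongr (Equiv.inv G), permCongr_inv_mulLeft, ← inv_mulRight, sign_inv]

theorem sign_mulLeft (g : G) :
    sign (Equiv.mulLeft g) = (-(-1) ^ orderOf g) ^ (Nat.card G / orderOf g) := by
  have hgen : ∀ x : zpowers g, x ∈ zpowers (⟨g, mem_zpowers g⟩ : zpowers g) := by
    rintro ⟨x, k, rfl⟩
    exact ⟨k, Subtype.ext (by simp)⟩
  have hindex : (zpowers g).index = Nat.card G / orderOf g := by
    rw [← index_mul_card (zpowers g), Nat.card_zpowers, Nat.mul_div_cancel _ (orderOf_pos g)]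
  rw [sign_mulLeft_eq_sign_mulRight, sign_mulRight_coe (zpowers g) ⟨g, mem_zpowers g⟩,
    sign_mulRight_of_forall_mem_zpowers hgen, Fintype.card_zpowers, hindex]

theorem mulLeft_mem_alternatingGroup_iff (hev : Even (Nat.card G)) (g : G) :
    Equiv.mulLeft g ∈ alternatingGroup G ↔ 2 ∣ Nat.card G / orderOf g := by
  have hsplit : orderOf g * (Nat.card G / orderOf g) = Nat.card G :=
    Nat.mul_div_cancel' (orderOf_dvd_natCard g)
  have hneg : -(-1 : ℤˣ) ^ orderOf g = (-1) ^ (orderOf g + 1) := by rw [pow_succ, mul_neg_one]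
  rw [mem_alternatingGroup, sign_mulLeft, hneg, ← pow_mul,
    neg_one_pow_eq_one_iff_even (by decide), ← even_iff_two_dvd]
  rw [← hsplit] at hev
  simp only [Nat.even_mul, Nat.even_add_one] at hev ⊢
  tauto

end Sign

theorem exists_sylow_isCyclic_iff {G : Type*} [Group G] [Finite G] {p : ℕ} [Fact p.Prime] :
    (∃ S : Sylow p G, IsCyclic S) ↔ ∃ g : G, ¬ p ∣ Nat.card G / orderOf g := by
  have hp : p.Prime := Fact.out
  have hG : Nat.card G ≠ 0 := Nat.card_pos.ne'
  constructor
  · rintro ⟨S, hS⟩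
    obtain ⟨x, hx⟩ := hS.exists_generator
    refine ⟨x, ?_⟩
    rw [orderOf_coe, orderOf_eq_card_of_forall_mem_zpowers hx, S.card_eq_multiplicity]
    exact Nat.not_dvd_ordCompl hp hG
  · rintro ⟨g, hg⟩
    set k := (Nat.card G).factorization p
    have hsplit : orderOf g * (Nat.card G / orderOf g) = Nat.card G :=
      Nat.mul_div_cancel' (orderOf_dvd_natCard g)
    have hpk : p ^ k ∣ orderOf g := by
      refine ((hp.coprime_iff_not_dvd.mpr hg).pow_left k).dvd_of_dvd_mul_right ?_
      rw [hsplit]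
      exact Nat.ordProj_dvd _ p
    have hcard : Nat.card (zpowers (g ^ (orderOf g / p ^ k))) = p ^ k := by
      rw [Nat.card_zpowers, orderOf_pow_orderOf_div (orderOf_pos g).ne' hpk]
    exact ⟨Sylow.ofCard _ hcard, isCyclic_zpowers _⟩

/-- For a finite group `G` of even order, the image of the left regular
representation `f : G → S_{|G|}` lands in the alternating group iff the Sylow 2-subgroups of
`G` are non-cyclic. -/
theorem statement_17 (G : Type*) [Group G] [Fintype G] [DecidableEq G]
    (hev : Even (Nat.card G)) :
    (∀ g : G, Equiv.mulLeft g ∈ alternatingGroup G) ↔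
      ∀ S : Sylow 2 G, ¬ IsCyclic ↥S := by
  have : Fact (Nat.Prime 2) := ⟨Nat.prime_two⟩
  simp only [mulLeft_mem_alternatingGroup_iff hev]
  rw [← not_iff_not]
  push Not
  exact exists_sylow_isCyclic_iff.symm
end
end
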